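/- arXiv:2212.14468 — 3 statements merged into one kernel-verified Lean document; each statement's English description precedes it below -/
import Mathlib

section
/- Let S be a countable state space, 0 ≤ γ < 1, ν a pmf on S (initial distribution), P a Markov transition kernel on S, p_0 = ν and p_{t+1}(s') = ∑_s p_t(s)·P(s'|s). Define ω(s) = (1-γ)·∑_{t=0}^∞ γ^t p_t(s)/p∞(s) where p∞(s) > 0 for all s. Then for every bounded f: S → ℝ, γ·∑_{s,s'} p∞(s)·ω(s)·P(s'|s)·f(s') + (1-γ)·∑_s ν(s)·f(s) = ∑_s p∞(s)·ω(s)·f(s). -/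
set_option maxHeartbeats 1000000 in
/-- The Bellman-flow equation L(ω, f) = 0 holds for the true discounted
visitation density ratio ω, for every bounded discriminator f. -/
theorem stmt_5 {S : Type*} [Countable S]
    (γ : ℝ) (hγ0 : 0 ≤ γ) (hγ1 : γ < 1)
    (ν : S → ℝ) (hν : (∀ s, 0 ≤ ν s) ∧ ∑' s, ν s = 1)
    (P : S → S → ℝ) (hP : ∀ s, (∀ s', 0 ≤ P s' s) ∧ ∑' s', P s' s = 1)
    (p : ℕ → S → ℝ) (hp0 : p 0 = ν)
    (hflow : ∀ t s', p (t + 1) s' = ∑' s, p t s * P s' s)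
    (pinf : S → ℝ) (hpinf_pos : ∀ s, 0 < pinf s) (hpinf : ∑' s, pinf s = 1)
    (ω : S → ℝ) (hω : ∀ s, ω s = (1 - γ) * ∑' t : ℕ, γ ^ t * p t s / pinf s) :
    ∀ (f : S → ℝ) (M : ℝ), (∀ s, |f s| ≤ M) →
      γ * (∑' s, pinf s * ω s * ∑' s', P s' s * f s')
        + (1 - γ) * (∑' s, ν s * f s)
      = ∑' s, pinf s * ω s * f s := by
  intro f M hf
  -- basic summability facts
  have hνsum : Summable ν := by
    by_contra h
    rw [tsum_eq_zero_of_not_summable h] at hν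
    exact one_ne_zero hν.2.symm
  have hPsum : ∀ s, Summable (fun s' => P s' s) := by
    intro s
    by_contra h
    exact absurd (hP s).2 (by rw [tsum_eq_zero_of_not_summable h]; norm_num)
  -- key : the p t are probability distributions
  have key : ∀ t, (∀ s, 0 ≤ p t s) ∧ Summable (p t) ∧ (∑' s, p t s) = 1 := by
    intro t
    induction t with
    | zero => rw [hp0]; exact ⟨hν.1, hνsum, hν.2⟩
    | succ t ih =>
      obtain ⟨hnn, hsum, htot⟩ := ih
      have hgnn : (0 : S × S → ℝ) ≤ fun q => p t q.1 * P q.2 q.1 := by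
        intro q; exact mul_nonneg (hnn q.1) ((hP q.1).1 q.2)
      have hfib : ∀ s, (∑' s', p t s * P s' s) = p t s := by
        intro s; rw [tsum_mul_left, (hP s).2, mul_one]
      have hg : Summable (fun q : S × S => p t q.1 * P q.2 q.1) := by
        refine (summable_prod_of_nonneg hgnn).2 ⟨fun s => (hPsum s).mul_left (p t s), ?_⟩
        simpa only [hfib] using hsum
      have hnn' : ∀ s', 0 ≤ p (t + 1) s' := by
        intro s'; rw [hflow]
        exact tsum_nonneg fun s => mul_nonneg (hnn s) ((hP s).1 s')
      have hsum' : Summable (p (t + 1)) := by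
        have := ((summable_prod_of_nonneg (f := fun q : S × S => p t q.2 * P q.1 q.2)
          (fun q => mul_nonneg (hnn q.2) ((hP q.2).1 q.1))).1 hg.prod_symm).2
        refine this.congr fun s' => ?_
        rw [hflow]
      refine ⟨hnn', hsum', ?_⟩
      have hcomm := Summable.tsum_comm (f := fun s s' => p t s * P s' s) hg
      calc ∑' s', p (t + 1) s' = ∑' (s') (s), p t s * P s' s := by
            exact tsum_congr fun s' => hflow t s'
        _ = ∑' (s) (s'), p t s * P s' s := hcomm
        _ = 1 := by rw [tsum_congr hfib, htot]
  -- S is nonempty, M ≥ 0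
  have hSne : Nonempty S := by
    by_contra h
    rw [not_nonempty_iff] at h
    have : (∑' s, ν s) = 0 := by simp
    rw [hν.2] at this; exact one_ne_zero this
  obtain ⟨s₀⟩ := hSne
  have hM : 0 ≤ M := le_trans (abs_nonneg _) (hf s₀)
  -- product summability of p t s * P s' s
  have hg2 : ∀ t, Summable (fun q : S × S => p t q.1 * P q.2 q.1) := by
    intro t
    refine (summable_prod_of_nonneg
      (fun q => mul_nonneg ((key t).1 q.1) ((hP q.1).1 q.2))).2
      ⟨fun s => (hPsum s).mul_left (p t s), ?_⟩
    have hfib : ∀ s, (∑' s', p t s * P s' s) = p t s := by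
      intro s; rw [tsum_mul_left, (hP s).2, mul_one]
    simpa only [hfib] using (key t).2.1
  -- summability of p t s * g s for bounded g, and bound on its tsum
  have hsumg : ∀ (g : S → ℝ), (∀ s, |g s| ≤ M) → ∀ t, Summable (fun s => p t s * g s) := by
    intro g hg t
    refine Summable.of_abs (Summable.of_nonneg_of_le (fun s => abs_nonneg _)
      (fun s => ?_) ((key t).2.1.mul_right M))
    rw [abs_mul, abs_of_nonneg ((key t).1 s)]
    exact mul_le_mul_of_nonneg_left (hg s) ((key t).1 s)
  have hbdg : ∀ (g : S → ℝ), (∀ s, |g s| ≤ M) → ∀ t, |∑' s, p t s * g s| ≤ M := by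
    intro g hg t
    have h1 : Summable fun s => |p t s * g s| := by
      refine Summable.of_nonneg_of_le (fun s => abs_nonneg _) (fun s => ?_)
        ((key t).2.1.mul_right M)
      rw [abs_mul, abs_of_nonneg ((key t).1 s)]
      exact mul_le_mul_of_nonneg_left (hg s) ((key t).1 s)
    calc |∑' s, p t s * g s| ≤ ∑' s, |p t s * g s| := by
          have := norm_tsum_le_tsum_norm (f := fun s => p t s * g s)
            (by simpa only [Real.norm_eq_abs] using h1)
          simpa only [Real.norm_eq_abs] using this
      _ ≤ ∑' s, p t s * M := by
          refine Summable.tsum_le_tsum (fun s => ?_) h1 ((key t).2.1.mul_right M)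
          rw [abs_mul, abs_of_nonneg ((key t).1 s)]
          exact mul_le_mul_of_nonneg_left (hg s) ((key t).1 s)
      _ = M := by rw [tsum_mul_right, (key t).2.2, one_mul]
  -- the main Fubini identity for bounded discriminators
  have main : ∀ (g : S → ℝ), (∀ s, |g s| ≤ M) →
      (∑' s, pinf s * ω s * g s) = (1 - γ) * ∑' t : ℕ, γ ^ t * ∑' s, p t s * g s := by
    intro g hg
    -- summability of the double family
    have hD : Summable (fun q : ℕ × S => γ ^ q.1 * p q.1 q.2 * M) := by
      refine (summable_prod_of_nonneg
        (fun q => mul_nonneg (mul_nonneg (pow_nonneg hγ0 _) ((key q.1).1 q.2)) hM)).2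
        ⟨fun t => ((key t).2.1.mul_left (γ ^ t)).mul_right M, ?_⟩
      have : ∀ t : ℕ, (∑' s, γ ^ t * p t s * M) = γ ^ t * M := by
        intro t
        calc (∑' s, γ ^ t * p t s * M) = ∑' s, γ ^ t * (p t s * M) := by
              exact tsum_congr fun s => by ring
          _ = γ ^ t * ((∑' s, p t s) * M) := by rw [tsum_mul_left, tsum_mul_right]
          _ = γ ^ t * M := by rw [(key t).2.2, one_mul]
      simp only [this]
      exact (summable_geometric_of_lt_one hγ0 hγ1).mul_right M
    have hF : Summable (Function.uncurry fun (t : ℕ) (s : S) => γ ^ t * p t s * g s) := by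
      refine Summable.of_abs (Summable.of_nonneg_of_le (fun q => abs_nonneg _)
        (fun q => ?_) hD)
      have h1 : 0 ≤ γ ^ q.1 * p q.1 q.2 :=
        mul_nonneg (pow_nonneg hγ0 _) ((key q.1).1 q.2)
      show |γ ^ q.1 * p q.1 q.2 * g q.2| ≤ γ ^ q.1 * p q.1 q.2 * M
      rw [abs_mul, abs_of_nonneg h1]
      exact mul_le_mul_of_nonneg_left (hg q.2) h1
    have hωs : ∀ s, pinf s * ω s * g s = (1 - γ) * ∑' t : ℕ, γ ^ t * p t s * g s := by
      intro s
      have hne := (hpinf_pos s).ne'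
      have h1 : (∑' t : ℕ, γ ^ t * p t s / pinf s) = (∑' t : ℕ, γ ^ t * p t s) / pinf s :=
        tsum_div_const
      rw [hω s, h1, show (∑' t : ℕ, γ ^ t * p t s * g s)
        = (∑' t : ℕ, γ ^ t * p t s) * g s from tsum_mul_right]
      field_simp
    calc (∑' s, pinf s * ω s * g s)
        = ∑' s, (1 - γ) * ∑' t : ℕ, γ ^ t * p t s * g s := tsum_congr hωs
      _ = (1 - γ) * ∑' (s) (t : ℕ), γ ^ t * p t s * g s := tsum_mul_left
      _ = (1 - γ) * ∑' (t : ℕ) (s), γ ^ t * p t s * g s := by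
          rw [Summable.tsum_comm (f := fun (t : ℕ) (s : S) => γ ^ t * p t s * g s) hF]
      _ = (1 - γ) * ∑' t : ℕ, γ ^ t * ∑' s, p t s * g s := by
          refine congrArg _ (tsum_congr fun t => ?_)
          rw [← tsum_mul_left]
          exact tsum_congr fun s => by ring
  -- the discriminator B s = E[f | next state from s]
  set B : S → ℝ := fun s => ∑' s', P s' s * f s' with hBdef
  have hBsum : ∀ s, Summable fun s' => P s' s * f s' := by
    intro s
    refine Summable.of_abs (Summable.of_nonneg_of_le (fun s' => abs_nonneg _)
      (fun s' => ?_) ((hPsum s).mul_right M))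
    rw [abs_mul, abs_of_nonneg ((hP s).1 s')]
    exact mul_le_mul_of_nonneg_left (hf s') ((hP s).1 s')
  have hB : ∀ s, |B s| ≤ M := by
    intro s
    have h1 : Summable fun s' => |P s' s * f s'| := by
      refine Summable.of_nonneg_of_le (fun s' => abs_nonneg _) (fun s' => ?_)
        ((hPsum s).mul_right M)
      rw [abs_mul, abs_of_nonneg ((hP s).1 s')]
      exact mul_le_mul_of_nonneg_left (hf s') ((hP s).1 s')
    calc |B s| ≤ ∑' s', |P s' s * f s'| := by
          have := norm_tsum_le_tsum_norm (f := fun s' => P s' s * f s')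
            (by simpa only [Real.norm_eq_abs] using h1)
          simpa only [Real.norm_eq_abs] using this
      _ ≤ ∑' s', P s' s * M := by
          refine Summable.tsum_le_tsum (fun s' => ?_) h1 ((hPsum s).mul_right M)
          rw [abs_mul, abs_of_nonneg ((hP s).1 s')]
          exact mul_le_mul_of_nonneg_left (hf s') ((hP s).1 s')
      _ = M := by rw [tsum_mul_right, (hP s).2, one_mul]
  -- inner swap : ∑ₛ p t s * B s = ∑_{s'} p (t+1) s' * f s'
  have hCA : ∀ t : ℕ, (∑' s, p t s * B s) = ∑' s', p (t + 1) s' * f s' := by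
    intro t
    have hG : Summable (Function.uncurry fun (s s' : S) => p t s * (P s' s * f s')) := by
      refine Summable.of_abs (Summable.of_nonneg_of_le (fun q => abs_nonneg _)
        (fun q => ?_) ((hg2 t).mul_right M))
      have h1 : 0 ≤ p t q.1 * P q.2 q.1 := mul_nonneg ((key t).1 q.1) ((hP q.1).1 q.2)
      show |p t q.1 * (P q.2 q.1 * f q.2)| ≤ p t q.1 * P q.2 q.1 * M
      rw [← mul_assoc, abs_mul, abs_mul, abs_of_nonneg ((key t).1 q.1),
        abs_of_nonneg ((hP q.1).1 q.2)]
      exact mul_le_mul_of_nonneg_left (hf q.2) h1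
    calc (∑' s, p t s * B s) = ∑' (s) (s'), p t s * (P s' s * f s') := by
          exact tsum_congr fun s => tsum_mul_left.symm
      _ = ∑' (s') (s), p t s * (P s' s * f s') := by
          rw [Summable.tsum_comm (f := fun (s s' : S) => p t s * (P s' s * f s')) hG]
      _ = ∑' s', p (t + 1) s' * f s' := by
          refine tsum_congr fun s' => ?_
          rw [hflow]
          rw [← tsum_mul_right (f := fun s => p t s * P s' s) (a := f s')]
          exact tsum_congr fun s => by ring
  -- put things together
  set A : ℕ → ℝ := fun t => ∑' s, p t s * f s with hAdef
  have husum : Summable fun t : ℕ => γ ^ t * A t := by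
    refine Summable.of_abs (Summable.of_nonneg_of_le (fun t => abs_nonneg _) (fun t => ?_)
      ((summable_geometric_of_lt_one hγ0 hγ1).mul_right M))
    rw [abs_mul, abs_pow, abs_of_nonneg hγ0]
    exact mul_le_mul_of_nonneg_left (hbdg f hf t) (pow_nonneg hγ0 t)
  have hshift : (∑' t : ℕ, γ ^ t * A t) = A 0 + γ * ∑' t : ℕ, γ ^ t * A (t + 1) := by
    rw [Summable.tsum_eq_zero_add husum]
    congr 1
    · simp
    · rw [← tsum_mul_left]
      exact tsum_congr fun t => by ring
  have hL : (∑' s, pinf s * ω s * B s) = (1 - γ) * ∑' t : ℕ, γ ^ t * A (t + 1) := by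
    rw [main B hB]
    congr 1
    exact tsum_congr fun t => by rw [hCA t]
  have hR : (∑' s, pinf s * ω s * f s) = (1 - γ) * ∑' t : ℕ, γ ^ t * A t := main f hf
  have hA0 : (∑' s, ν s * f s) = A 0 := by rw [hAdef]; simp [hp0]
  rw [hR, hL, hA0, hshift]
  ring
end

section
/- Let S be a countable state space, 0 ≤ γ < 1, and suppose ω: S → ℝ satisfies the flow equation γ·∑_s p∞(s)·ω(s)·P(s'|s) + (1-γ)·ν(s') = p∞(s')·ω(s') for all s', where p∞(s) > 0 for all s. Then ω(s) = (1-γ)·∑_{t=0}^∞ γ^t p_t(s)/p∞(s), where p_0 = ν and p_{t+1}(s') = ∑_s p_t(s)P(s'|s). -/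
/-!
Write `T` for the push-forward `(T f)(s') = ∑ₛ f(s) P(s'|s)` of a density along the kernel and
`m = p∞ ω`. The flow equation reads `m = γ T m + (1 - γ) ν`. Since `P` is column-stochastic, `T`
does not increase the `ℓ¹` norm, so `m` lies in `ℓ¹` and unrolling the equation `n` times gives
`m = (1 - γ) ∑_{t<n} γᵗ Tᵗ ν + γⁿ Tⁿ m`, whose remainder is at most `γⁿ ‖m‖₁ → 0`.
Since `p_t = Tᵗ ν`, dividing by `p∞ > 0` gives the formula for `ω`.
-/

open Filter Topology

section

variable {S : Type*}

/-- `P s' s` is the probability of a step from `s` to `s'`. -/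
def IsStochastic (P : S → S → ℝ) : Prop :=
  ∀ s, (∀ s', 0 ≤ P s' s) ∧ ∑' s', P s' s = 1

noncomputable def pushDensity (P : S → S → ℝ) (f : S → ℝ) (s' : S) : ℝ :=
  ∑' s, f s * P s' s

theorem summable_of_tsum_ne_zero {ι α : Type*} [AddCommMonoid α] [TopologicalSpace α]
    {f : ι → α} (h : ∑' i, f i ≠ 0) : Summable f := by
  by_contra hf
  exact h (tsum_eq_zero_of_not_summable hf)

namespace IsStochastic

variable {P : S → S → ℝ}

theorem nonneg (hP : IsStochastic P) (s s' : S) : 0 ≤ P s' s :=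
  (hP s).1 s'

theorem summable_col (hP : IsStochastic P) (s : S) : Summable fun s' => P s' s :=
  summable_of_tsum_ne_zero (by rw [(hP s).2]; exact one_ne_zero)

theorem tsum_mul_col (hP : IsStochastic P) (c : ℝ) (s : S) : ∑' s', c * P s' s = c := by
  rw [tsum_mul_left, (hP s).2, mul_one]

theorem le_one (hP : IsStochastic P) (s s' : S) : P s' s ≤ 1 := by
  simpa only [(hP s).2] using (hP.summable_col s).le_tsum s' fun j _ => hP.nonneg s j

theorem summable_mul (hP : IsStochastic P) {f : S → ℝ} (hf : Summable f) (s' : S) :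
    Summable fun s => f s * P s' s := by
  refine Summable.of_norm_bounded (summable_abs_iff.2 hf) fun s => ?_
  rw [Real.norm_eq_abs, abs_mul, abs_of_nonneg (hP.nonneg s s')]
  exact mul_le_of_le_one_right (abs_nonneg _) (hP.le_one s s')

theorem summable_abs_mul_uncurry (hP : IsStochastic P) {f : S → ℝ} (hf : Summable f) :
    Summable fun q : S × S => |f q.1| * P q.2 q.1 := by
  refine (summable_prod_of_nonneg fun q => mul_nonneg (abs_nonneg _) (hP.nonneg _ _)).2
    ⟨fun s => (hP.summable_col s).mul_left |f s|, ?_⟩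
  simpa only [hP.tsum_mul_col] using summable_abs_iff.2 hf

theorem abs_pushDensity_le (hP : IsStochastic P) {f : S → ℝ} (hf : Summable f) (s' : S) :
    |pushDensity P f s'| ≤ ∑' s, |f s| * P s' s := by
  refine tsum_of_norm_bounded (f := fun s => f s * P s' s)
    (hP.summable_mul (summable_abs_iff.2 hf) s').hasSum fun s => ?_
  rw [Real.norm_eq_abs, abs_mul, abs_of_nonneg (hP.nonneg s s')]

theorem summable_pushDensity (hP : IsStochastic P) {f : S → ℝ} (hf : Summable f) :
    Summable (pushDensity P f) :=
  (hP.summable_abs_mul_uncurry hf).prod_symm.prod.of_norm_bounded (hP.abs_pushDensity_le hf)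

theorem tsum_abs_pushDensity_le (hP : IsStochastic P) {f : S → ℝ} (hf : Summable f) :
    ∑' s', |pushDensity P f s'| ≤ ∑' s, |f s| :=
  calc ∑' s', |pushDensity P f s'|
      ≤ ∑' s', ∑' s, |f s| * P s' s :=
        (summable_abs_iff.2 (hP.summable_pushDensity hf)).tsum_le_tsum
          (hP.abs_pushDensity_le hf) (hP.summable_abs_mul_uncurry hf).prod_symm.prod
    _ = ∑' s, |f s| := by
        rw [Summable.tsum_comm (f := fun s s' => |f s| * P s' s)
          (hP.summable_abs_mul_uncurry hf)]
        simp only [hP.tsum_mul_col]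

theorem pushDensity_mul_add_mul (hP : IsStochastic P) {f g : S → ℝ} (hf : Summable f)
    (hg : Summable g) (a b : ℝ) :
    pushDensity P (fun s => a * f s + b * g s) =
      fun s' => a * pushDensity P f s' + b * pushDensity P g s' := by
  funext s'
  simp only [pushDensity, ← tsum_mul_left]
  rw [← ((hP.summable_mul hf s').mul_left a).tsum_add ((hP.summable_mul hg s').mul_left b)]
  exact tsum_congr fun s => by ring

theorem summable_iterate_pushDensity (hP : IsStochastic P) {f : S → ℝ} (hf : Summable f)
    (n : ℕ) : Summable ((pushDensity P)^[n] f) := by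
  induction n with
  | zero => exact hf
  | succ n ih => rw [Function.iterate_succ_apply']; exact hP.summable_pushDensity ih

theorem tsum_abs_iterate_pushDensity_le (hP : IsStochastic P) {f : S → ℝ} (hf : Summable f)
    (n : ℕ) : ∑' s, |(pushDensity P)^[n] f s| ≤ ∑' s, |f s| := by
  induction n with
  | zero => rfl
  | succ n ih =>
    rw [Function.iterate_succ_apply']
    exact (hP.tsum_abs_pushDensity_le (hP.summable_iterate_pushDensity hf n)).trans ih

theorem abs_iterate_pushDensity_le (hP : IsStochastic P) {f : S → ℝ} (hf : Summable f)
    (n : ℕ) (s : S) : |(pushDensity P)^[n] f s| ≤ ∑' s, |f s| :=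
  ((summable_abs_iff.2 (hP.summable_iterate_pushDensity hf n)).le_tsum s
    fun _ _ => abs_nonneg _).trans (hP.tsum_abs_iterate_pushDensity_le hf n)

section FixedPoint

variable {γ : ℝ} {m ν : S → ℝ}

theorem iterate_pushDensity_of_fixedPoint (hP : IsStochastic P) (hm : Summable m)
    (hν : Summable ν) (hfix : ∀ s', γ * pushDensity P m s' + (1 - γ) * ν s' = m s') (n : ℕ) :
    (pushDensity P)^[n] m =
      fun s => γ * (pushDensity P)^[n + 1] m s + (1 - γ) * (pushDensity P)^[n] ν s := by
  induction n with
  | zero => funext s; exact (hfix s).symm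
  | succ n ih =>
    rw [Function.iterate_succ_apply' _ n m, ih, Function.iterate_succ_apply' _ n ν,
      hP.pushDensity_mul_add_mul (hP.summable_iterate_pushDensity hm _)
        (hP.summable_iterate_pushDensity hν _),
      ← Function.iterate_succ_apply' (pushDensity P) (n + 1) m]

theorem eq_sum_range_add_of_fixedPoint (hP : IsStochastic P) (hm : Summable m)
    (hν : Summable ν) (hfix : ∀ s', γ * pushDensity P m s' + (1 - γ) * ν s' = m s') (n : ℕ)
    (s : S) :
    m s = ∑ t ∈ Finset.range n, (1 - γ) * γ ^ t * (pushDensity P)^[t] ν s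
      + γ ^ n * (pushDensity P)^[n] m s := by
  induction n with
  | zero => simp
  | succ n ih =>
    rw [ih, Finset.sum_range_succ,
      congrFun (hP.iterate_pushDensity_of_fixedPoint hm hν hfix n) s]
    ring

theorem hasSum_of_fixedPoint (hP : IsStochastic P) (hγ0 : 0 ≤ γ) (hγ1 : γ < 1)
    (hm : Summable m) (hν : Summable ν)
    (hfix : ∀ s', γ * pushDensity P m s' + (1 - γ) * ν s' = m s') (s : S) :
    HasSum (fun t => (1 - γ) * γ ^ t * (pushDensity P)^[t] ν s) (m s) := by
  have hsummable : Summable fun t => (1 - γ) * γ ^ t * (pushDensity P)^[t] ν s := by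
    refine ((summable_geometric_of_lt_one hγ0 hγ1).mul_left
      ((1 - γ) * ∑' s, |ν s|)).of_norm_bounded fun t => ?_
    have hweight : 0 ≤ (1 - γ) * γ ^ t := mul_nonneg (by linarith) (pow_nonneg hγ0 t)
    rw [Real.norm_eq_abs, abs_mul, abs_of_nonneg hweight]
    calc (1 - γ) * γ ^ t * |(pushDensity P)^[t] ν s|
        ≤ (1 - γ) * γ ^ t * ∑' s, |ν s| :=
          mul_le_mul_of_nonneg_left (hP.abs_iterate_pushDensity_le hν t s) hweight
      _ = (1 - γ) * (∑' s, |ν s|) * γ ^ t := by ring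
  have hremainder : Tendsto (fun n => γ ^ n * (pushDensity P)^[n] m s) atTop (𝓝 0) := by
    refine squeeze_zero_norm (a := fun n => γ ^ n * ∑' s, |m s|) (fun n => ?_) ?_
    · rw [Real.norm_eq_abs, abs_mul, abs_of_nonneg (pow_nonneg hγ0 n)]
      exact mul_le_mul_of_nonneg_left (hP.abs_iterate_pushDensity_le hm n s) (pow_nonneg hγ0 n)
    · simpa using (tendsto_pow_atTop_nhds_zero_of_lt_one hγ0 hγ1).mul_const (∑' s, |m s|)
  rw [hsummable.hasSum_iff_tendsto_nat]
  have hlim := (tendsto_const_nhds (x := m s)).sub hremainder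
  rw [sub_zero] at hlim
  refine hlim.congr fun n => ?_
  rw [sub_eq_iff_eq_add]
  exact hP.eq_sum_range_add_of_fixedPoint hm hν hfix n s

end FixedPoint

end IsStochastic

end

theorem stmt_6_general {S : Type*}
    (γ : ℝ) (hγ0 : 0 ≤ γ) (hγ1 : γ < 1)
    (ν : S → ℝ) (hν : (∀ s, 0 ≤ ν s) ∧ ∑' s, ν s = 1)
    (P : S → S → ℝ) (hP : ∀ s, (∀ s', 0 ≤ P s' s) ∧ ∑' s', P s' s = 1)
    (p : ℕ → S → ℝ) (hp0 : p 0 = ν)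
    (hflow : ∀ t s', p (t + 1) s' = ∑' s, p t s * P s' s)
    (pinf : S → ℝ) (hpinf_pos : ∀ s, 0 < pinf s) (hpinf : ∑' s, pinf s = 1)
    (ω : S → ℝ) (hbdd : ∃ C, ∀ s, |ω s| ≤ C)
    (hfix : ∀ s', γ * (∑' s, pinf s * ω s * P s' s) + (1 - γ) * ν s'
              = pinf s' * ω s') :
    ∀ s, ω s = (1 - γ) * ∑' t : ℕ, γ ^ t * p t s / pinf s := by
  replace hP : IsStochastic P := hP
  have hp : ∀ t, p t = (pushDensity P)^[t] ν := by
    intro t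
    induction t with
    | zero => exact hp0
    | succ t ih =>
      funext s'
      rw [hflow, Function.iterate_succ_apply', ← ih]
      rfl
  obtain ⟨C, hC⟩ := hbdd
  have hm : Summable fun s => pinf s * ω s := by
    refine Summable.of_norm_bounded
      ((summable_of_tsum_ne_zero (by rw [hpinf]; exact one_ne_zero)).mul_right C) fun s => ?_
    rw [Real.norm_eq_abs, abs_mul, abs_of_pos (hpinf_pos s)]
    exact mul_le_mul_of_nonneg_left (hC s) (hpinf_pos s).le
  have hνs : Summable ν := summable_of_tsum_ne_zero (by rw [hν.2]; exact one_ne_zero)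
  intro s
  have hsum := (hP.hasSum_of_fixedPoint hγ0 hγ1 hm hνs hfix s).tsum_eq
  rw [tsum_div_const, ← mul_div_assoc, ← tsum_mul_left, eq_div_iff (hpinf_pos s).ne', mul_comm,
    ← hsum]
  simp only [hp, mul_assoc]

/-- Uniqueness: any bounded solution of the Bellman-flow fixed point
equation equals the discounted visitation density ratio. -/
theorem stmt_6 {S : Type*} [Countable S]
    (γ : ℝ) (hγ0 : 0 ≤ γ) (hγ1 : γ < 1)
    (ν : S → ℝ) (hν : (∀ s, 0 ≤ ν s) ∧ ∑' s, ν s = 1)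
    (P : S → S → ℝ) (hP : ∀ s, (∀ s', 0 ≤ P s' s) ∧ ∑' s', P s' s = 1)
    (p : ℕ → S → ℝ) (hp0 : p 0 = ν)
    (hflow : ∀ t s', p (t + 1) s' = ∑' s, p t s * P s' s)
    (pinf : S → ℝ) (hpinf_pos : ∀ s, 0 < pinf s) (hpinf : ∑' s, pinf s = 1)
    (ω : S → ℝ) (hbdd : ∃ C, ∀ s, |ω s| ≤ C)
    (hfix : ∀ s', γ * (∑' s, pinf s * ω s * P s' s) + (1 - γ) * ν s'
              = pinf s' * ω s') :
    ∀ s, ω s = (1 - γ) * ∑' t : ℕ, γ ^ t * p t s / pinf s :=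
  stmt_6_general γ hγ0 hγ1 ν hν P hP p hp0 hflow pinf hpinf_pos hpinf ω hbdd hfix
end

section
/- Let T: B(S×Z×A) → B(S×Z×A) be defined by (TQ)(s,z,a) = r(s,z,a) + γ·∑_{s'} P(s'|s,z,a)·∑_{z',a'} c(z'|s')·p_a(a'|z',s')·Q(s',z',a'), where r is bounded, P is a transition kernel, ∑_a p_a(a|z,s)=1 with p_a ≥ 0, and ∑_z |c(z|s)| ≤ C for all s with γ·C < 1. Then T is a contraction with modulus γ·C in the sup norm, and hence has a unique bounded fixed point. -/
lemma aux_inner {A : Type*} [Fintype A] (C K : ℝ) (hK : 0 ≤ K)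
    (pa : A → Bool → ℝ) (hpa : ∀ z, (∀ a, 0 ≤ pa a z) ∧ ∑ a : A, pa a z = 1)
    (c : Bool → ℝ) (hc : ∑ z : Bool, |c z| ≤ C)
    (D : Bool → A → ℝ) (hD : ∀ z a, |D z a| ≤ K) :
    |∑ z : Bool, c z * ∑ a : A, pa a z * D z a| ≤ C * K := by
  calc |∑ z : Bool, c z * ∑ a : A, pa a z * D z a|
      ≤ ∑ z : Bool, |c z * ∑ a : A, pa a z * D z a| := Finset.abs_sum_le_sum_abs _ _
    _ ≤ ∑ z : Bool, |c z| * K := by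
        refine Finset.sum_le_sum fun z _ => ?_
        rw [abs_mul]
        refine mul_le_mul_of_nonneg_left ?_ (abs_nonneg _)
        calc |∑ a : A, pa a z * D z a| ≤ ∑ a : A, |pa a z * D z a| :=
              Finset.abs_sum_le_sum_abs _ _
          _ ≤ ∑ a : A, pa a z * K := Finset.sum_le_sum fun a _ => by
              rw [abs_mul, abs_of_nonneg ((hpa z).1 a)]
              exact mul_le_mul_of_nonneg_left (hD z a) ((hpa z).1 a)
          _ = K := by rw [← Finset.sum_mul, (hpa z).2, one_mul]
    _ = (∑ z : Bool, |c z|) * K := (Finset.sum_mul _ _ _).symm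
    _ ≤ C * K := mul_le_mul_of_nonneg_right hc hK

lemma aux_tsum {S : Type*} (B : ℝ) (hB : 0 ≤ B) (P : S → ℝ)
    (hP0 : ∀ s, 0 ≤ P s) (hP1 : ∑' s, P s = 1)
    (D : S → ℝ) (hD : ∀ s, |D s| ≤ B) :
    Summable (fun s => P s * D s) ∧ |∑' s, P s * D s| ≤ B := by
  have hPsum : Summable P := by
    by_contra h
    rw [tsum_eq_zero_of_not_summable h] at hP1
    norm_num at hP1
  have hle : ∀ s, |P s * D s| ≤ P s * B := by
    intro s
    rw [abs_mul, abs_of_nonneg (hP0 s)]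
    exact mul_le_mul_of_nonneg_left (hD s) (hP0 s)
  have habs : Summable (fun s => |P s * D s|) :=
    (hPsum.mul_right B).of_nonneg_of_le (fun s => abs_nonneg _) hle
  have hsum : Summable (fun s => P s * D s) := habs.of_abs
  refine ⟨hsum, ?_⟩
  calc |∑' s, P s * D s| ≤ ∑' s, |P s * D s| := by
        simpa only [Real.norm_eq_abs] using norm_tsum_le_tsum_norm (f := fun s => P s * D s)
          (by simpa only [Real.norm_eq_abs] using habs)
    _ ≤ ∑' s, P s * B := Summable.tsum_le_tsum hle habs (hPsum.mul_right B)
    _ = B := by rw [tsum_mul_right, hP1, one_mul]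

/-- The confounded Bellman operator is a γC-contraction in sup norm and
hence has a unique bounded fixed point. -/
theorem stmt_8 {S A : Type*} [Countable S] [Fintype A]
    (γ C : ℝ) (hγ0 : 0 ≤ γ) (hγ1 : γ < 1) (hγC : γ * C < 1)
    (r : S → Bool → A → ℝ) (Rmax : ℝ) (hr : ∀ s z a, |r s z a| ≤ Rmax)
    (P : S → Bool → A → S → ℝ)
    (hP : ∀ s z a, (∀ s', 0 ≤ P s z a s') ∧ ∑' s', P s z a s' = 1)
    (pa : A → Bool → S → ℝ)
    (hpa : ∀ z s, (∀ a, 0 ≤ pa a z s) ∧ ∑ a : A, pa a z s = 1)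
    (c : Bool → S → ℝ) (hc : ∀ s, ∑ z : Bool, |c z s| ≤ C)
    (T : (S → Bool → A → ℝ) → (S → Bool → A → ℝ))
    (hT : ∀ Q s z a, T Q s z a
        = r s z a + γ * ∑' s', P s z a s' *
            ∑ z' : Bool, c z' s' * ∑ a' : A, pa a' z' s' * Q s' z' a') :
    (∀ (Q1 Q2 : S → Bool → A → ℝ) (K : ℝ),
        (∀ s z a, |Q1 s z a - Q2 s z a| ≤ K) →
        ∀ s z a, |T Q1 s z a - T Q2 s z a| ≤ γ * C * K) ∧
    (∃ Q : S → Bool → A → ℝ,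
        ((∃ M, ∀ s z a, |Q s z a| ≤ M) ∧ T Q = Q) ∧
        ∀ Q' : S → Bool → A → ℝ,
          ((∃ M, ∀ s z a, |Q' s z a| ≤ M) ∧ T Q' = Q') → Q' = Q) := by
  -- Part 1: contraction
  have hcontr : ∀ (Q1 Q2 : S → Bool → A → ℝ) (K : ℝ),
      (∀ s z a, |Q1 s z a - Q2 s z a| ≤ K) →
      ∀ s z a, |T Q1 s z a - T Q2 s z a| ≤ γ * C * K := by
    intro Q1 Q2 K hK s z a
    have hC0 : 0 ≤ C :=
      le_trans (Finset.sum_nonneg fun z _ => abs_nonneg _) (hc s)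
    have hK0 : 0 ≤ K := (abs_nonneg _).trans (hK s z a)
    set Δ1 : S → ℝ := fun s' => ∑ z' : Bool, c z' s' * ∑ a' : A, pa a' z' s' * Q1 s' z' a' with hΔ1
    set Δ2 : S → ℝ := fun s' => ∑ z' : Bool, c z' s' * ∑ a' : A, pa a' z' s' * Q2 s' z' a' with hΔ2
    set D : S → ℝ := fun s' =>
      ∑ z' : Bool, c z' s' * ∑ a' : A, pa a' z' s' * (Q1 s' z' a' - Q2 s' z' a') with hDdef
    have hΔsub : ∀ s', Δ1 s' - Δ2 s' = D s' := by
      intro s'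
      simp only [hΔ1, hΔ2, hDdef, ← Finset.sum_sub_distrib, ← mul_sub]
    have hDb : ∀ s', |D s'| ≤ C * K := fun s' =>
      aux_inner C K hK0 (fun a' z' => pa a' z' s') (fun z' => hpa z' s')
        (fun z' => c z' s') (hc s') (fun z' a' => Q1 s' z' a' - Q2 s' z' a')
        (fun z' a' => hK s' z' a')
    obtain ⟨hDsum, hDbnd⟩ := aux_tsum (C * K) (by positivity) (P s z a)
      (hP s z a).1 (hP s z a).2 D hDb
    by_cases h1 : Summable (fun s' => P s z a s' * Δ1 s')
    · have h2 : Summable (fun s' => P s z a s' * Δ2 s') := by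
        have he : (fun s' => P s z a s' * Δ2 s')
            = fun s' => P s z a s' * Δ1 s' - P s z a s' * D s' := by
          funext s'; rw [← mul_sub, ← hΔsub s']; ring
        rw [he]; exact h1.sub hDsum
      have key : T Q1 s z a - T Q2 s z a = γ * ∑' s', P s z a s' * D s' := by
        rw [hT, hT]
        have : (∑' s', P s z a s' * D s')
            = (∑' s', P s z a s' * Δ1 s') - ∑' s', P s z a s' * Δ2 s' := by
          rw [← Summable.tsum_sub h1 h2]
          congr 1; funext s'
          rw [← mul_sub, hΔsub s']
        rw [this]; ring
      rw [key, abs_mul, abs_of_nonneg hγ0, mul_assoc]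
      exact mul_le_mul_of_nonneg_left hDbnd hγ0
    · have h2 : ¬ Summable (fun s' => P s z a s' * Δ2 s') := by
        intro h2
        apply h1
        have he : (fun s' => P s z a s' * Δ1 s')
            = fun s' => P s z a s' * Δ2 s' + P s z a s' * D s' := by
          funext s'; rw [← mul_add, ← hΔsub s']; ring
        rw [he]; exact h2.add hDsum
      have key : T Q1 s z a - T Q2 s z a = 0 := by
        rw [hT, hT, tsum_eq_zero_of_not_summable h1, tsum_eq_zero_of_not_summable h2]
        ring
      rw [key, abs_zero]
      positivity
  refine ⟨hcontr, ?_⟩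
  -- Part 2: unique bounded fixed point
  by_cases hS : Nonempty S
  · by_cases hA : Nonempty A
    · -- main case
      have hC0 : 0 ≤ C := by
        obtain ⟨s0⟩ := hS
        exact le_trans (Finset.sum_nonneg fun z _ => abs_nonneg _) (hc s0)
      have hRmax : 0 ≤ Rmax := by
        obtain ⟨s0⟩ := hS; obtain ⟨a0⟩ := hA
        exact (abs_nonneg _).trans (hr s0 true a0)
      letI : TopologicalSpace (S × Bool × A) := ⊥
      haveI : DiscreteTopology (S × Bool × A) := ⟨rfl⟩
      set X := BoundedContinuousFunction (S × Bool × A) ℝ with hX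
      -- builder
      have mkB : ∀ (Q : S → Bool → A → ℝ) (M : ℝ), (∀ s z a, |Q s z a| ≤ M) →
          {f : X // ∀ x : S × Bool × A, f x = Q x.1 x.2.1 x.2.2} := by
        intro Q M hQ
        refine ⟨⟨⟨fun x => Q x.1 x.2.1 x.2.2, continuous_of_discreteTopology⟩,
          ⟨2 * M, fun x y => ?_⟩⟩, fun x => rfl⟩
        rw [Real.dist_eq]
        calc |Q x.1 x.2.1 x.2.2 - Q y.1 y.2.1 y.2.2|
            ≤ |Q x.1 x.2.1 x.2.2| + |Q y.1 y.2.1 y.2.2| := abs_sub _ _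
          _ ≤ M + M := add_le_add (hQ _ _ _) (hQ _ _ _)
          _ = 2 * M := by ring
      -- T of a bounded function is bounded
      have hTbdd : ∀ (Q : S → Bool → A → ℝ) (M : ℝ), (∀ s z a, |Q s z a| ≤ M) →
          ∀ s z a, |T Q s z a| ≤ Rmax + γ * C * M := by
        intro Q M hQ s z a
        have hT0 : T (fun _ _ _ => (0 : ℝ)) s z a = r s z a := by
          rw [hT]; simp
        have := hcontr Q (fun _ _ _ => (0 : ℝ)) M (by simpa using hQ) s z a
        rw [hT0] at this
        calc |T Q s z a| = |(T Q s z a - r s z a) + r s z a| := by ring_nf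
          _ ≤ |T Q s z a - r s z a| + |r s z a| := abs_add_le _ _
          _ ≤ γ * C * M + Rmax := add_le_add this (hr s z a)
          _ = Rmax + γ * C * M := by ring
      -- the operator on X
      set F : X → X := fun f =>
        (mkB (T (fun s z a => f (s, z, a))) (Rmax + γ * C * ‖f‖)
          (hTbdd _ ‖f‖ (fun s z a => by
            simpa [Real.norm_eq_abs] using f.norm_coe_le_norm (s, z, a)))).1 with hF
      have hFval : ∀ (f : X) (x : S × Bool × A),
          F f x = T (fun s z a => f (s, z, a)) x.1 x.2.1 x.2.2 := by
        intro f x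
        exact (mkB (T (fun s z a => f (s, z, a))) (Rmax + γ * C * ‖f‖) _).2 x
      set K : NNReal := ⟨γ * C, by positivity⟩ with hKdef
      have hcw : ContractingWith K F := by
        constructor
        · exact_mod_cast hγC
        · refine LipschitzWith.of_dist_le_mul fun f g => ?_
          show dist (F f) (F g) ≤ γ * C * dist f g
          have hd0 : (0 : ℝ) ≤ γ * C * dist f g := by positivity
          rw [BoundedContinuousFunction.dist_le hd0]
          intro x
          rw [hFval, hFval, Real.dist_eq]
          exact hcontr (fun s z a => f (s, z, a)) (fun s z a => g (s, z, a))
            (dist f g) (fun s z a => by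
              simpa [Real.dist_eq] using
                BoundedContinuousFunction.dist_coe_le_dist (f := f) (g := g) (s, z, a))
            x.1 x.2.1 x.2.2
      haveI : Nonempty X := ⟨0⟩
      set Qf : X := ContractingWith.fixedPoint F hcw with hQf
      have hfix : F Qf = Qf := hcw.fixedPoint_isFixedPt
      refine ⟨fun s z a => Qf (s, z, a), ⟨⟨‖Qf‖, fun s z a => by
        simpa [Real.norm_eq_abs] using Qf.norm_coe_le_norm (s, z, a)⟩, ?_⟩, ?_⟩
      · funext s z a
        calc T (fun s z a => Qf (s, z, a)) s z a = F Qf (s, z, a) := (hFval Qf (s, z, a)).symm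
          _ = Qf (s, z, a) := by rw [hfix]
      · rintro Q' ⟨⟨M', hM'⟩, hfix'⟩
        obtain ⟨f', hf'⟩ := mkB Q' M' hM'
        have hQ'eq : (fun s z a => f' (s, z, a)) = Q' := by
          funext s z a; exact hf' (s, z, a)
        have : F f' = f' := by
          ext x
          rw [hFval, hQ'eq, hfix', hf']
        have heq : f' = Qf := hcw.fixedPoint_unique this
        funext s z a
        rw [← hf' (s, z, a), heq]
    · -- A empty
      rw [not_nonempty_iff] at hA
      refine ⟨fun _ _ a => hA.elim a, ⟨⟨0, fun _ _ a => hA.elim a⟩, ?_⟩, ?_⟩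
      · funext s z a; exact hA.elim a
      · intro Q' _; funext s z a; exact hA.elim a
  · -- S empty
    rw [not_nonempty_iff] at hS
    refine ⟨fun s => hS.elim s, ⟨⟨0, fun s => hS.elim s⟩, ?_⟩, ?_⟩
    · funext s; exact hS.elim s
    · intro Q' _; funext s; exact hS.elim s
end
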